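/- Let Γ be a visibility representation of a connected finite simple planar graph G with n vertices and m edges, and suppose that Γ has no redundant columns. Then the width of Γ is at most max{m, n}. -/

import Mathlib

open Set

/-- A point in the plane. -/
abbrev Pt : Type := ℝ × ℝ

/-- A point has integer coordinates. -/
def IsIntPt (p : Pt) : Prop := (∃ a : ℤ, p.1 = (a : ℝ)) ∧ (∃ b : ℤ, p.2 = (b : ℝ))

/-- The (closed) segments of a polygonal chain, as pairs of consecutive corners. -/
def chainSegs (l : List Pt) : List (Pt × Pt) := l.zip l.tail

/-- The set of points covered by a polygonal chain. -/
def chainSet (l : List Pt) : Set Pt := ⋃ s ∈ chainSegs l, segment ℝ s.1 s.2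

/-- A polygonal chain is simple (non-self-intersecting): it has at least two
corners, all corners are distinct, and two of its segments meet only if they are
consecutive, and then only in their shared corner. -/
def IsSimpleChain (l : List Pt) : Prop :=
  2 ≤ l.length ∧ l.Nodup ∧
    ∀ i j : ℕ, i < j → ∀ (hi : i < (chainSegs l).length) (hj : j < (chainSegs l).length),
      segment ℝ ((chainSegs l).get ⟨i, hi⟩).1 ((chainSegs l).get ⟨i, hi⟩).2 ∩
        segment ℝ ((chainSegs l).get ⟨j, hj⟩).1 ((chainSegs l).get ⟨j, hj⟩).2 ⊆
        if j = i + 1 then {((chainSegs l).get ⟨j, hj⟩).1} else (∅ : Set Pt)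

/-- Every interior corner of the chain is a genuine bend (a direction change). -/
def GenuineBends (l : List Pt) : Prop :=
  ∀ i : ℕ, ∀ h : i + 2 < l.length,
    ¬ Collinear ℝ ({l.get ⟨i, by omega⟩, l.get ⟨i + 1, by omega⟩, l.get ⟨i + 2, h⟩} : Set Pt)

/-- The chain is a y-monotone path (horizontal segments allowed). -/
def IsMonoChain (l : List Pt) : Prop :=
  (l.map Prod.snd).Chain' (· ≤ ·) ∨ (l.map Prod.snd).Chain' (fun a b => b ≤ a)

/-- All segments of the chain are horizontal or vertical. -/
def IsOrthoChain (l : List Pt) : Prop :=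
  ∀ s ∈ chainSegs l, s.1.1 = s.2.1 ∨ s.1.2 = s.2.2

/-- A poly-line drawing of a graph `G`: every vertex is a point, and every edge
`uv` is the polygonal chain through the list `bends u v` of bend points
(listed in order from `u` to `v`). -/
structure PolylineDrawing {V : Type*} (G : SimpleGraph V) where
  pos : V → Pt
  bends : V → V → List Pt
  bends_symm : ∀ u v, bends v u = (bends u v).reverse

namespace PolylineDrawing

variable {V : Type*} {G : SimpleGraph V}

/-- The corner list of the curve of edge `uv`. -/
def chain (D : PolylineDrawing G) (u v : V) : List Pt :=
  D.pos u :: (D.bends u v ++ [D.pos v])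

/-- The set of points of the curve of edge `uv`. -/
def curve (D : PolylineDrawing G) (u v : V) : Set Pt := chainSet (D.chain u v)

/-- The defining elements of the drawing: vertex points and bends. -/
def points (D : PolylineDrawing G) : Set Pt :=
  Set.range D.pos ∪ ⋃ (u) (v) (_ : G.Adj u v), {p | p ∈ D.bends u v}

/-- The drawing is planar: vertex points are pairwise distinct, every edge curve
is a simple chain whose interior corners are genuine bends, an edge curve contains
no vertex point other than its endpoints, and two distinct edge curves intersect
only in points of common endpoints. -/
def IsPlanar (D : PolylineDrawing G) : Prop :=
  Function.Injective D.pos ∧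
  (∀ u v, G.Adj u v → IsSimpleChain (D.chain u v) ∧ GenuineBends (D.chain u v)) ∧
  (∀ u v w, G.Adj u v → w ≠ u → w ≠ v → D.pos w ∉ D.curve u v) ∧
  (∀ u v x y, G.Adj u v → G.Adj x y → s(u, v) ≠ s(x, y) →
    D.curve u v ∩ D.curve x y ⊆ D.pos '' (({u, v} : Set V) ∩ ({x, y} : Set V)))

/-- All defining elements have integer coordinates. -/
def IntCoords (D : PolylineDrawing G) : Prop := ∀ p ∈ D.points, IsIntPt p

/-- A straight-line drawing: no edge has bends. -/
def IsStraightLine (D : PolylineDrawing G) : Prop := ∀ u v : V, D.bends u v = []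

/-- Every edge curve is a y-monotone path. -/
def IsYMonotone (D : PolylineDrawing G) : Prop :=
  ∀ u v, G.Adj u v → IsMonoChain (D.chain u v)

/-- The drawing fits (after translation) in the rows `1, …, h`. -/
def InHeight (D : PolylineDrawing G) (h : ℕ) : Prop :=
  ∃ y0 : ℤ, ∀ p ∈ D.points, (y0 : ℝ) ≤ p.2 ∧ p.2 ≤ (y0 : ℝ) + (h : ℝ) - 1

/-- The drawing fits (after translation) in the columns `1, …, w`. -/
def InWidth (D : PolylineDrawing G) (w : ℕ) : Prop :=
  ∃ x0 : ℤ, ∀ p ∈ D.points, (x0 : ℝ) ≤ p.1 ∧ p.1 ≤ (x0 : ℝ) + (w : ℝ) - 1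

end PolylineDrawing

/-- An axis-parallel box (possibly degenerated to a segment or a point). -/
structure Box where
  x1 : ℝ
  x2 : ℝ
  y1 : ℝ
  y2 : ℝ
  hx : x1 ≤ x2
  hy : y1 ≤ y2

/-- The set of points of a box. -/
def Box.pts (b : Box) : Set Pt := Set.Icc b.x1 b.x2 ×ˢ Set.Icc b.y1 b.y2

/-- An orthogonal drawing of a graph `G`: every vertex is an axis-aligned box, and
every edge `uv` is an axis-parallel polygonal chain `chain u v` (its first corner is
the attachment point on the box of `u`, its last corner the attachment point on the
box of `v`). -/
structure OrthDrawing {V : Type*} (G : SimpleGraph V) where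
  box : V → Box
  chain : V → V → List Pt
  chain_symm : ∀ u v, chain v u = (chain u v).reverse

namespace OrthDrawing

variable {V : Type*} {G : SimpleGraph V}

/-- The set of points of the curve of edge `uv`. -/
def curve (D : OrthDrawing G) (u v : V) : Set Pt := chainSet (D.chain u v)

/-- The defining elements of the drawing: corners of vertex boxes, and corners
(attachment points and bends) of edge chains. -/
def points (D : OrthDrawing G) : Set Pt :=
  (⋃ v, ({((D.box v).x1, (D.box v).y1), ((D.box v).x1, (D.box v).y2),
          ((D.box v).x2, (D.box v).y1), ((D.box v).x2, (D.box v).y2)} : Set Pt)) ∪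
    ⋃ (u) (v) (_ : G.Adj u v), {p | p ∈ D.chain u v}

/-- All points covered by the drawing (boxes and edge curves). -/
def region (D : OrthDrawing G) : Set Pt :=
  (⋃ v, (D.box v).pts) ∪ ⋃ (u) (v) (_ : G.Adj u v), D.curve u v

/-- The drawing is planar: vertex boxes are pairwise disjoint; every edge curve is a
simple axis-parallel chain, with genuine bends, joining the boxes of its endpoints;
an edge curve meets a vertex box only in its attachment points; and two distinct
edge curves intersect only in common endpoints. -/
def IsPlanar (D : OrthDrawing G) : Prop :=
  (∀ u v : V, u ≠ v → Disjoint (D.box u).pts (D.box v).pts) ∧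
  (∀ u v, G.Adj u v → IsSimpleChain (D.chain u v) ∧ IsOrthoChain (D.chain u v) ∧
      GenuineBends (D.chain u v)) ∧
  (∀ u v, G.Adj u v → ∃ p q l, D.chain u v = p :: (l ++ [q]) ∧
      p ∈ (D.box u).pts ∧ q ∈ (D.box v).pts) ∧
  (∀ u v w, G.Adj u v → D.curve u v ∩ (D.box w).pts ⊆
      {p | (w = u ∧ (D.chain u v).head? = some p) ∨
           (w = v ∧ (D.chain u v).getLast? = some p)}) ∧
  (∀ u v x y, G.Adj u v → G.Adj x y → s(u, v) ≠ s(x, y) →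
      D.curve u v ∩ D.curve x y ⊆
        {p | ((D.chain u v).head? = some p ∨ (D.chain u v).getLast? = some p) ∧
             ((D.chain x y).head? = some p ∨ (D.chain x y).getLast? = some p)})

/-- A flat drawing: every vertex box is degenerated to a horizontal segment. -/
def IsFlat (D : OrthDrawing G) : Prop := ∀ v, (D.box v).y1 = (D.box v).y2

/-- A visibility representation: an orthogonal drawing without bends, i.e. every
edge is a single horizontal or vertical segment. -/
def IsVR (D : OrthDrawing G) : Prop := ∀ u v, G.Adj u v → (D.chain u v).length = 2

/-- Every edge curve is a y-monotone path. -/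
def IsYMonotone (D : OrthDrawing G) : Prop := ∀ u v, G.Adj u v → IsMonoChain (D.chain u v)

/-- All defining elements have integer coordinates. -/
def IntCoords (D : OrthDrawing G) : Prop := ∀ p ∈ D.points, IsIntPt p

/-- The drawing fits (after translation) in the rows `1, …, h`. -/
def InHeight (D : OrthDrawing G) (h : ℕ) : Prop :=
  ∃ y0 : ℤ, ∀ p ∈ D.points, (y0 : ℝ) ≤ p.2 ∧ p.2 ≤ (y0 : ℝ) + (h : ℝ) - 1

/-- The drawing fits (after translation) in the columns `1, …, w`. -/
def InWidth (D : OrthDrawing G) (w : ℕ) : Prop :=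
  ∃ x0 : ℤ, ∀ p ∈ D.points, (x0 : ℝ) ≤ p.1 ∧ p.1 ≤ (x0 : ℝ) + (w : ℝ) - 1

end OrthDrawing

/-- The (integer) column `c` is occupied by the drawing. -/
def OrthDrawing.ColOccupied {V : Type*} {G : SimpleGraph V} (D : OrthDrawing G)
    (c : ℤ) : Prop :=
  ∃ p ∈ D.region, p.1 = (c : ℝ)

/-- Column `c` contains a vertical edge segment. -/
def OrthDrawing.HasVerticalEdgeAt {V : Type*} {G : SimpleGraph V} (D : OrthDrawing G)
    (c : ℤ) : Prop :=
  ∃ u v, G.Adj u v ∧ ∃ p q : Pt, D.chain u v = [p, q] ∧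
    p.1 = (c : ℝ) ∧ q.1 = (c : ℝ) ∧ p.2 ≠ q.2

/-- Column `c` is the only column intersected by the box of some vertex. -/
def OrthDrawing.SoleBoxColumnAt {V : Type*} {G : SimpleGraph V} (D : OrthDrawing G)
    (c : ℤ) : Prop :=
  ∃ v, (D.box v).x1 = (c : ℝ) ∧ (D.box v).x2 = (c : ℝ)

/-- No occupied column is redundant, i.e. every occupied column contains a vertical
edge segment or is the only column intersected by some vertex box. -/
def OrthDrawing.NoRedundantColumns {V : Type*} {G : SimpleGraph V}
    (D : OrthDrawing G) : Prop :=
  ∀ c : ℤ, D.ColOccupied c → D.HasVerticalEdgeAt c ∨ D.SoleBoxColumnAt c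

/-!
The region covered by a visibility representation of a connected graph is connected, so every
integer column between the leftmost and the rightmost defining element is occupied; without
redundant columns each of them contains a vertical edge or is the only column of some box.
Distinct columns of the first kind carry distinct vertical edges and distinct columns of the second
kind distinct vertices, which gives width `≤ n` if no edge is vertical. Otherwise root a BFS tree at
an endpoint of a vertical edge and charge each vertex of the second kind to its parent edge: that
edge is not vertical, since it would lie in the column of the vertex. This gives width `≤ m`.
-/

theorem SimpleGraph.Reachable.exists_adj_dist_add_one_eq {V : Type*} {G : SimpleGraph V}
    {v r : V} (h : G.Reachable v r) (hne : v ≠ r) :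
    ∃ w, G.Adj v w ∧ G.dist w r + 1 = G.dist v r := by
  obtain ⟨p, hp⟩ := h.exists_walk_length_eq_dist
  cases p with
  | nil => exact absurd rfl hne
  | cons hadj q =>
    obtain ⟨q', hq'⟩ := (hadj.reachable.symm.trans h).exists_walk_length_eq_dist
    have hq := G.dist_le q
    have hcons := G.dist_le (SimpleGraph.Walk.cons hadj q')
    simp only [SimpleGraph.Walk.length_cons] at hp hcons
    exact ⟨_, hadj, by omega⟩

/-- Each vertex of `S` is charged to the first edge of a shortest path to `r`. -/
theorem SimpleGraph.Preconnected.card_le_card_filter_edgeFinset {V : Type*} {G : SimpleGraph V}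
    [Fintype G.edgeSet] (hG : G.Preconnected) {S : Finset V} {r : V} (hr : r ∉ S)
    {P : Sym2 V → Prop} [DecidablePred P] (hP : ∀ v ∈ S, ∀ w, G.Adj v w → P s(v, w)) :
    S.card ≤ (G.edgeFinset.filter P).card := by
  refine Finset.card_le_card_of_forall_subsingleton
    (fun v e => ∃ w, G.Adj v w ∧ G.dist w r + 1 = G.dist v r ∧ s(v, w) = e) ?_ ?_
  · intro v hv
    obtain ⟨w, hadj, hdist⟩ := (hG v r).exists_adj_dist_add_one_eq (ne_of_mem_of_not_mem hv hr)
    exact ⟨s(v, w), Finset.mem_filter.2 ⟨G.mem_edgeFinset.2 hadj, hP v hv w hadj⟩, w, hadj,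
      hdist, rfl⟩
  · rintro e - v ⟨-, w, -, hd, rfl⟩ v' ⟨-, w', -, hd', he⟩
    rcases Sym2.eq_iff.1 he with ⟨rfl, -⟩ | ⟨rfl, rfl⟩
    · rfl
    · omega

theorem SimpleGraph.Preconnected.isPreconnected_iUnion {V X : Type*} [TopologicalSpace X]
    {G : SimpleGraph V} (hG : G.Preconnected) {s : V → Set X} (hs : ∀ v, IsPreconnected (s v))
    (hadj : ∀ u v, G.Adj u v → (s u ∩ s v).Nonempty) : IsPreconnected (⋃ v, s v) :=
  IsPreconnected.iUnion_of_reflTransGen hs fun u v =>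
    Relation.ReflTransGen.mono hadj u v ((SimpleGraph.reachable_iff_reflTransGen u v).1 (hG u v))

namespace Box

theorem isPreconnected_pts (b : Box) : IsPreconnected b.pts :=
  ((convex_Icc b.x1 b.x2).prod (convex_Icc b.y1 b.y2)).isPreconnected

theorem corners_mem_pts (b : Box) :
    (b.x1, b.y1) ∈ b.pts ∧ (b.x1, b.y2) ∈ b.pts ∧ (b.x2, b.y1) ∈ b.pts ∧ (b.x2, b.y2) ∈ b.pts := by
  simp [Box.pts, b.hx, b.hy]

theorem fst_eq_of_mem_pts {b : Box} {c : ℝ} (h1 : b.x1 = c) (h2 : b.x2 = c) {p : Pt}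
    (hp : p ∈ b.pts) : p.1 = c :=
  le_antisymm (h2 ▸ hp.1.2) (h1 ▸ hp.1.1)

end Box

namespace OrthDrawing

variable {V : Type*} {G : SimpleGraph V} {D : OrthDrawing G}

theorem IsPlanar.mem_box_of_chain_eq (hpl : D.IsPlanar) {u v : V} (h : G.Adj u v) {p q : Pt}
    (hc : D.chain u v = [p, q]) : p ∈ (D.box u).pts ∧ q ∈ (D.box v).pts := by
  obtain ⟨p', q', l, hc', hp, hq⟩ := hpl.2.2.1 u v h
  rw [hc] at hc'
  obtain ⟨rfl, hq'⟩ := List.cons_eq_cons.1 hc'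
  obtain rfl : q' = q := by simpa using congrArg List.getLast? hq'.symm
  exact ⟨hp, hq⟩

theorem IsVR.exists_chain_eq (hvr : D.IsVR) {u v : V} (h : G.Adj u v) :
    ∃ p q, D.chain u v = [p, q] :=
  List.length_eq_two.1 (hvr u v h)

theorem curve_eq_segment {u v : V} {p q : Pt} (hc : D.chain u v = [p, q]) :
    D.curve u v = segment ℝ p q := by
  simp [curve, hc, chainSet, chainSegs]

def star (D : OrthDrawing G) (v : V) : Set Pt :=
  (D.box v).pts ∪ ⋃ (w) (_ : G.Adj v w), D.curve v w

theorem region_eq_iUnion_star : D.region = ⋃ v, D.star v :=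
  (iUnion_union_distrib _ _).symm

theorem isPreconnected_star (hpl : D.IsPlanar) (hvr : D.IsVR) (v : V) :
    IsPreconnected (D.star v) := by
  have hcorner := (D.box v).corners_mem_pts.1
  refine isPreconnected_of_forall ((D.box v).x1, (D.box v).y1) fun y hy => ?_
  rcases hy with hy | hy
  · exact ⟨_, subset_union_left, hcorner, hy, (D.box v).isPreconnected_pts⟩
  obtain ⟨w, hw, hy⟩ := mem_iUnion₂.1 hy
  obtain ⟨p, q, hc⟩ := hvr.exists_chain_eq hw
  refine ⟨(D.box v).pts ∪ D.curve v w,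
    union_subset_union_right _ (subset_iUnion₂ (s := fun w _ => D.curve v w) w hw),
    Or.inl hcorner, Or.inr hy, ?_⟩
  rw [curve_eq_segment hc]
  exact (D.box v).isPreconnected_pts.union' ⟨p, (hpl.mem_box_of_chain_eq hw hc).1,
    left_mem_segment ℝ p q⟩ (convex_segment p q).isPreconnected

theorem star_inter_star_nonempty (hpl : D.IsPlanar) (hvr : D.IsVR) {u v : V} (h : G.Adj u v) :
    (D.star u ∩ D.star v).Nonempty := by
  obtain ⟨p, q, hc⟩ := hvr.exists_chain_eq h
  refine ⟨q, Or.inr (mem_iUnion₂.2 ⟨v, h, ?_⟩), Or.inl (hpl.mem_box_of_chain_eq h hc).2⟩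
  rw [curve_eq_segment hc]
  exact right_mem_segment ℝ p q

theorem isPreconnected_region (hG : G.Preconnected) (hpl : D.IsPlanar) (hvr : D.IsVR) :
    IsPreconnected D.region := by
  rw [region_eq_iUnion_star]
  exact hG.isPreconnected_iUnion (isPreconnected_star hpl hvr) fun _ _ h =>
    star_inter_star_nonempty hpl hvr h

theorem colOccupied_of_mem_Icc (hreg : IsPreconnected D.region) {a b : Pt} (ha : a ∈ D.region)
    (hb : b ∈ D.region) {c : ℤ} (hc : (c : ℝ) ∈ Icc a.1 b.1) : D.ColOccupied c := by
  obtain ⟨p, hp, hpc⟩ := (hreg.image Prod.fst continuous_fst.continuousOn).Icc_subset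
    (mem_image_of_mem _ ha) (mem_image_of_mem _ hb) hc
  exact ⟨p, hp, hpc⟩

theorem points_subset_region (hvr : D.IsVR) : D.points ⊆ D.region := by
  rintro x (hx | hx)
  · obtain ⟨v, hx⟩ := mem_iUnion.1 hx
    have := (D.box v).corners_mem_pts
    refine Or.inl (mem_iUnion.2 ⟨v, ?_⟩)
    rcases hx with rfl | rfl | rfl | rfl <;> tauto
  · simp only [mem_iUnion] at hx
    obtain ⟨u, v, h, hx⟩ := hx
    obtain ⟨p, q, hc⟩ := hvr.exists_chain_eq h
    refine Or.inr (mem_iUnion.2 ⟨u, mem_iUnion₂.2 ⟨v, h, ?_⟩⟩)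
    rw [hc] at hx
    rw [curve_eq_segment hc]
    rcases List.mem_pair.1 hx with rfl | rfl
    exacts [left_mem_segment ℝ _ _, right_mem_segment ℝ _ _]

theorem points_finite [Finite V] : D.points.Finite :=
  (finite_iUnion fun _ => toFinite _).union <| (finite_iUnion fun u => finite_iUnion fun v =>
    (D.chain u v).finite_toSet).subset <| iUnion₂_mono fun _ _ => iUnion_subset fun _ => subset_rfl

def IsVerticalEdgeIn (D : OrthDrawing G) (c : ℤ) (e : Sym2 V) : Prop :=
  ∃ u v, G.Adj u v ∧ s(u, v) = e ∧ ∃ p q : Pt, D.chain u v = [p, q] ∧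
    p.1 = (c : ℝ) ∧ q.1 = (c : ℝ) ∧ p.2 ≠ q.2

theorem hasVerticalEdgeAt_iff {c : ℤ} : D.HasVerticalEdgeAt c ↔ ∃ e, D.IsVerticalEdgeIn c e :=
  ⟨fun ⟨u, v, h, hpq⟩ => ⟨_, u, v, h, rfl, hpq⟩, fun ⟨_, u, v, h, _, hpq⟩ => ⟨u, v, h, hpq⟩⟩

theorem IsVerticalEdgeIn.mem_edgeSet {c : ℤ} {e : Sym2 V} (he : D.IsVerticalEdgeIn c e) :
    e ∈ G.edgeSet := by
  obtain ⟨u, v, h, rfl, -⟩ := he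
  exact h

theorem IsVerticalEdgeIn.unique {c c' : ℤ} {e : Sym2 V} (he : D.IsVerticalEdgeIn c e)
    (he' : D.IsVerticalEdgeIn c' e) : c = c' := by
  obtain ⟨u, v, -, rfl, p, q, hc, hp, hq, -⟩ := he
  obtain ⟨u', v', -, huv, p', q', hc', hp', hq', -⟩ := he'
  rcases Sym2.eq_iff.1 huv with ⟨rfl, rfl⟩ | ⟨rfl, rfl⟩
  · obtain ⟨rfl, -⟩ := List.cons_eq_cons.1 (hc.symm.trans hc')
    exact_mod_cast hp.symm.trans hp'
  · rw [D.chain_symm, hc] at hc'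
    obtain ⟨rfl, -⟩ := List.cons_eq_cons.1 hc'
    exact_mod_cast hq.symm.trans hp'

theorem IsVerticalEdgeIn.notMem (hpl : D.IsPlanar) {c c' : ℤ} {e : Sym2 V}
    (he : D.IsVerticalEdgeIn c' e) (hc : ¬ D.HasVerticalEdgeAt c) {v : V}
    (h1 : (D.box v).x1 = c) (h2 : (D.box v).x2 = c) : v ∉ e := by
  intro hv
  suffices c' = c from hc (this ▸ hasVerticalEdgeAt_iff.2 ⟨e, he⟩)
  obtain ⟨a, b, hab, rfl, p, q, hpq, hp, hq, -⟩ := he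
  obtain ⟨hpa, hqb⟩ := hpl.mem_box_of_chain_eq hab hpq
  rcases Sym2.mem_iff.1 hv with rfl | rfl
  · exact_mod_cast hp.symm.trans (Box.fst_eq_of_mem_pts h1 h2 hpa)
  · exact_mod_cast hq.symm.trans (Box.fst_eq_of_mem_pts h1 h2 hqb)

theorem card_le_max_of_forall_nonredundant [Fintype V] (hG : G.Preconnected) (hpl : D.IsPlanar)
    {I : Finset ℤ} (hI : ∀ c ∈ I, D.HasVerticalEdgeAt c ∨ D.SoleBoxColumnAt c) :
    I.card ≤ max G.edgeSet.ncard (Fintype.card V) := by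
  classical
  set A := I.filter D.HasVerticalEdgeAt
  set B := I.filter fun c => ¬ D.HasVerticalEdgeAt c
  set S := Finset.univ.filter fun v => ∃ c ∈ B, (D.box v).x1 = c ∧ (D.box v).x2 = c
  set P : Sym2 V → Prop := fun e => ∃ c, D.IsVerticalEdgeIn c e
  have hcard : I.card = A.card + B.card := (Finset.card_filter_add_card_filter_not _).symm
  have hm : G.edgeSet.ncard =
      (G.edgeFinset.filter P).card + (G.edgeFinset.filter (¬ P ·)).card := by
    rw [Finset.card_filter_add_card_filter_not, ← SimpleGraph.coe_edgeFinset, ncard_coe_finset]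
  have hA : A.card ≤ (G.edgeFinset.filter P).card :=
    Finset.card_le_card_of_forall_subsingleton D.IsVerticalEdgeIn
      (fun c hc => by
        obtain ⟨e, he⟩ := hasVerticalEdgeAt_iff.1 (Finset.mem_filter.1 hc).2
        exact ⟨e, Finset.mem_filter.2 ⟨G.mem_edgeFinset.2 he.mem_edgeSet, c, he⟩, he⟩)
      fun _ _ _ hc _ hc' => hc.2.unique hc'.2
  have hB : B.card ≤ S.card :=
    Finset.card_le_card_of_forall_subsingleton
      (fun (c : ℤ) v => (D.box v).x1 = c ∧ (D.box v).x2 = c)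
      (fun c hc => by
        obtain ⟨hcI, hc⟩ := Finset.mem_filter.1 hc
        obtain ⟨v, hv⟩ := (hI c hcI).resolve_left hc
        exact ⟨v, Finset.mem_filter.2 ⟨Finset.mem_univ v, c, Finset.mem_filter.2 ⟨hcI, hc⟩, hv⟩,
          hv⟩)
      fun _ _ _ hc _ hc' => by exact_mod_cast hc.2.1.symm.trans hc'.2.1
  have hS : ∀ v ∈ S, ∀ c e, D.IsVerticalEdgeIn c e → v ∉ e := by
    intro v hv c e he
    obtain ⟨c', hc', h1, h2⟩ := (Finset.mem_filter.1 hv).2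
    exact he.notMem hpl (Finset.mem_filter.1 hc').2 h1 h2
  rcases A.eq_empty_or_nonempty with hA0 | ⟨c, hc⟩
  · have := S.card_le_univ
    rw [hA0, Finset.card_empty] at hcard
    omega
  obtain ⟨e, he⟩ := hasVerticalEdgeAt_iff.1 (Finset.mem_filter.1 hc).2
  obtain ⟨r, hr⟩ : ∃ r, r ∈ e := e.ind fun u _ => ⟨u, Sym2.mem_mk_left _ _⟩
  have := hG.card_le_card_filter_edgeFinset (P := (¬ P ·)) (fun hrS => hS r hrS c e he hr)
    fun v hv w _ ⟨c, hvw⟩ => hS v hv c _ hvw (Sym2.mem_mk_left v w)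
  omega

theorem inWidth_of_forall_fst_mem_Icc {a b : ℤ} {w : ℕ}
    (h : ∀ p ∈ D.points, p.1 ∈ Icc (a : ℝ) b) (hw : (Finset.Icc a b).card ≤ w) :
    D.InWidth w := by
  refine ⟨a, fun p hp => ⟨(h p hp).1, (h p hp).2.trans ?_⟩⟩
  rw [Int.card_Icc] at hw
  have : b ≤ a + w - 1 := by omega
  exact_mod_cast this

end OrthDrawing

/-- Any visibility representation without redundant columns of a
connected finite simple graph `G` with `n` vertices and `m` edges has width at most
`max m n`. -/
theorem VR_no_redundant_columns_width {V : Type} [Fintype V] (G : SimpleGraph V)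
    (hconn : G.Connected)
    (D : OrthDrawing G) (hpl : D.IsPlanar) (hvr : D.IsVR) (hint : D.IntCoords)
    (hred : D.NoRedundantColumns) :
    D.InWidth (max G.edgeSet.ncard (Fintype.card V)) := by
  have hreg := D.isPreconnected_region hconn.preconnected hpl hvr
  obtain ⟨v⟩ := hconn.nonempty
  have hne : D.points.Nonempty := ⟨_, Or.inl (mem_iUnion.2 ⟨v, Or.inl rfl⟩)⟩
  obtain ⟨pmin, hpmin, hmin⟩ := D.points.exists_min_image Prod.fst D.points_finite hne
  obtain ⟨pmax, hpmax, hmax⟩ := D.points.exists_max_image Prod.fst D.points_finite hne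
  obtain ⟨⟨a, ha⟩, -⟩ := hint pmin hpmin
  obtain ⟨⟨b, hb⟩, -⟩ := hint pmax hpmax
  refine D.inWidth_of_forall_fst_mem_Icc (fun p hp => ⟨ha ▸ hmin p hp, hb ▸ hmax p hp⟩) ?_
  refine OrthDrawing.card_le_max_of_forall_nonredundant hconn.preconnected hpl
    fun c hc => hred c ?_
  rw [Finset.mem_Icc] at hc
  refine OrthDrawing.colOccupied_of_mem_Icc hreg (OrthDrawing.points_subset_region hvr hpmin)
    (OrthDrawing.points_subset_region hvr hpmax) ⟨?_, ?_⟩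
  · rw [ha]; exact_mod_cast hc.1
  · rw [hb]; exact_mod_cast hc.2
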